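/- For a semi-ideal ultraparallel trapezoid (both upper vertices ideal with canonical horocycles), with lower edge length a₁₂ and distance ρ₁₂ between the line through the ideal upper vertices and the lower line, cosh(a₁₂) = 1 + 2/sinh²(ρ₁₂). -/

import Mathlib

/-!
Write `K = cosh ρ₁₂` and `b = ⟨B₁, B₂⟩`. Since `lᵢ ∝ Bᵢ + m` is orthogonal to `m'`, each `Bᵢ`
satisfies `⟨Bᵢ, m'⟩ = -K`. The Gram determinant of the four vectors `B₁, B₂, m, m'` in the
three-dimensional Minkowski space vanishes, which gives `(b + 1) ((K² - 1) b + K² + 1) = 0`.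
The root `b = -1` would force `B₁ = B₂` and hence make the ideal points coincide, so
`cosh a₁₂ = -b = (K² + 1) / (K² - 1) = 1 + 2 / sinh² ρ₁₂`.
-/

/-- The Minkowski bilinear form on `ℝ^{1,2}`. -/
def mink (x y : Fin 3 → ℝ) : ℝ := -(x 0 * y 0) + x 1 * y 1 + x 2 * y 2

theorem mink_comm (x y : Fin 3 → ℝ) : mink x y = mink y x := by
  simp only [mink]; ring

theorem mink_add_right (x y z : Fin 3 → ℝ) : mink x (y + z) = mink x y + mink x z := by
  simp only [mink, Pi.add_apply]; ring

theorem mink_smul_right (c : ℝ) (x y : Fin 3 → ℝ) : mink x (c • y) = c * mink x y := by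
  simp only [mink, Pi.smul_apply, smul_eq_mul]; ring

theorem mink_sub_left (x y z : Fin 3 → ℝ) : mink (x - y) z = mink x z - mink y z := by
  simp only [mink, Pi.sub_apply]; ring

theorem mink_sub_right (x y z : Fin 3 → ℝ) : mink x (y - z) = mink x y - mink x z := by
  simp only [mink, Pi.sub_apply]; ring

theorem mink_gram_eq_mul_diagonal_mul_transpose {n : ℕ} (w : Fin n → Fin 3 → ℝ) :
    Matrix.of (fun i j => mink (w i) (w j)) =
      Matrix.of w * Matrix.diagonal ![(-1 : ℝ), 1, 1] * (Matrix.of w).transpose := by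
  ext i j
  simp [Matrix.mul_apply, Fin.sum_univ_three, mink]

theorem det_mink_gram_eq_zero {n : ℕ} (hn : 3 < n) (w : Fin n → Fin 3 → ℝ) :
    (Matrix.of fun i j => mink (w i) (w j)).det = 0 := by
  by_contra h
  have hfull := Matrix.rank_of_isUnit _ ((Matrix.isUnit_iff_isUnit_det _).2 (Ne.isUnit h))
  have hle : (Matrix.of w * Matrix.diagonal ![(-1 : ℝ), 1, 1] * (Matrix.of w).transpose).rank ≤ 3 :=
    (Matrix.rank_mul_le_left _ _).trans <|
      (Matrix.rank_mul_le_left _ _).trans (Matrix.rank_le_width (Matrix.of w))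
  rw [← mink_gram_eq_mul_diagonal_mul_transpose, hfull] at hle
  simp only [Fintype.card_fin] at hle
  omega

theorem eq_zero_of_mink_timelike_orthogonal_null {t w : Fin 3 → ℝ} (ht : mink t t < 0)
    (htw : mink t w = 0) (hw : mink w w = 0) : w = 0 := by
  simp only [mink] at ht htw hw
  have hcs : (t 0 * w 0) ^ 2 ≤ (t 1 ^ 2 + t 2 ^ 2) * w 0 ^ 2 := by
    rw [show t 0 * w 0 = t 1 * w 1 + t 2 * w 2 by linarith,
      show w 0 ^ 2 = w 1 ^ 2 + w 2 ^ 2 by linarith]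
    nlinarith [sq_nonneg (t 1 * w 2 - t 2 * w 1)]
  have hgap : 0 < t 0 ^ 2 - t 1 ^ 2 - t 2 ^ 2 := by linarith
  have h0 : w 0 = 0 := by
    have : w 0 ^ 2 * (t 0 ^ 2 - t 1 ^ 2 - t 2 ^ 2) ≤ 0 := by linarith
    exact pow_eq_zero_iff two_ne_zero |>.1 <|
      le_antisymm (nonpos_of_mul_nonpos_left this hgap) (sq_nonneg _)
  have h1 : w 1 = 0 := by nlinarith [sq_nonneg (w 1), sq_nonneg (w 2)]
  have h2 : w 2 = 0 := by nlinarith [sq_nonneg (w 1), sq_nonneg (w 2)]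
  ext i; fin_cases i <;> assumption

theorem eq_of_mink_eq_neg_one {B₁ B₂ : Fin 3 → ℝ} (h₁ : mink B₁ B₁ = -1) (h₂ : mink B₂ B₂ = -1)
    (h₁₂ : mink B₁ B₂ = -1) : B₁ = B₂ := by
  refine sub_eq_zero.1 (eq_zero_of_mink_timelike_orthogonal_null (t := B₁) (by linarith) ?_ ?_)
  · rw [mink_sub_right, h₁, h₁₂, sub_self]
  · rw [mink_sub_left, mink_sub_right, mink_sub_right, h₁, h₂, h₁₂, mink_comm B₂ B₁, h₁₂]
    norm_num

theorem mink_eq_neg_of_orthogonal_smul_add {n B m l : Fin 3 → ℝ} {c : ℝ} (hc : c ≠ 0)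
    (hl : l = c • (B + m)) (hn : mink n l = 0) : mink n B = -mink n m := by
  rw [hl, mink_smul_right, mink_add_right] at hn
  linarith [(mul_eq_zero.1 hn).resolve_left hc]

theorem trapezoid_gram_relation {B₁ B₂ m m' : Fin 3 → ℝ} {K : ℝ}
    (hm : mink m m = 1) (hm' : mink m' m' = 1) (hmm' : mink m m' = K)
    (h₁ : mink B₁ B₁ = -1) (h₂ : mink B₂ B₂ = -1) (h₁m : mink B₁ m = 0) (h₂m : mink B₂ m = 0)
    (h₁m' : mink B₁ m' = -K) (h₂m' : mink B₂ m' = -K) :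
    (mink B₁ B₂ + 1) * ((K ^ 2 - 1) * mink B₁ B₂ + K ^ 2 + 1) = 0 := by
  set b := mink B₁ B₂ with hb
  have hgram : (Matrix.of fun i j => mink (![B₁, B₂, m, m'] i) (![B₁, B₂, m, m'] j)) =
      !![-1, b, 0, -K; b, -1, 0, -K; 0, 0, 1, K; -K, -K, K, 1] := by
    ext i j
    fin_cases i <;> fin_cases j <;>
      simp [mink_comm B₂ B₁, mink_comm m B₁, mink_comm m B₂, mink_comm m' _, *]
  have hdet := det_mink_gram_eq_zero (by norm_num) ![B₁, B₂, m, m']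
  rw [hgram, Matrix.det_succ_row_zero] at hdet
  simp +decide [Fin.sum_univ_succ, Matrix.det_fin_three,
    Fin.succAbove_of_castSucc_lt, Fin.succAbove_of_le_castSucc] at hdet
  linear_combination hdet

/-- The upper side is the geodesic with ideal endpoints `l₁, l₂`, orthogonal to the unit normal
`m'`; the lower line has unit normal `m`; `lᵢ` is a positive multiple of `Bᵢ + m` exactly when
`Bᵢ` is the orthogonal projection of the ideal point `lᵢ` to the lower line; and
`⟨m, m'⟩ = cosh ρ₁₂`, `cosh a₁₂ = -⟨B₁, B₂⟩`. -/
theorem semi_ideal_trapezoid_height_general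
    (m m' B₁ B₂ l₁ l₂ : Fin 3 → ℝ) (ρ₁₂ a₁₂ : ℝ)
    (hm : mink m m = 1) (hm' : mink m' m' = 1)
    (hB₁ : mink B₁ B₁ = -1) (hB₁m : mink B₁ m = 0)
    (hB₂ : mink B₂ B₂ = -1) (hB₂m : mink B₂ m = 0)
    (hind : ¬ ∃ t : ℝ, l₂ = t • l₁)
    (hup₁ : mink m' l₁ = 0) (hup₂ : mink m' l₂ = 0)
    (hproj₁ : ∃ c : ℝ, 0 < c ∧ l₁ = c • (B₁ + m))
    (hproj₂ : ∃ c : ℝ, 0 < c ∧ l₂ = c • (B₂ + m))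
    (hρ : 0 < ρ₁₂) (hdist : mink m m' = Real.cosh ρ₁₂)
    (halen : Real.cosh a₁₂ = -(mink B₁ B₂)) :
    Real.cosh a₁₂ = 1 + 2 / Real.sinh ρ₁₂ ^ 2 := by
  obtain ⟨c₁, hc₁, hl₁⟩ := hproj₁
  obtain ⟨c₂, hc₂, hl₂⟩ := hproj₂
  have hB₁m' : mink B₁ m' = -Real.cosh ρ₁₂ := by
    rw [mink_comm, mink_eq_neg_of_orthogonal_smul_add hc₁.ne' hl₁ hup₁, mink_comm, hdist]
  have hB₂m' : mink B₂ m' = -Real.cosh ρ₁₂ := by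
    rw [mink_comm, mink_eq_neg_of_orthogonal_smul_add hc₂.ne' hl₂ hup₂, mink_comm, hdist]
  have hB₁₂ : mink B₁ B₂ ≠ -1 := fun h ↦ hind ⟨c₂ / c₁, by
    rw [hl₂, hl₁, smul_smul, div_mul_cancel₀ _ hc₁.ne', eq_of_mink_eq_neg_one hB₁ hB₂ h]⟩
  have hrel := (mul_eq_zero.1 (trapezoid_gram_relation hm hm' hdist hB₁ hB₂ hB₁m hB₂m hB₁m' hB₂m')
    ).resolve_left (fun h ↦ hB₁₂ (eq_neg_of_add_eq_zero_left h))
  have hsinh : Real.sinh ρ₁₂ ^ 2 ≠ 0 := pow_ne_zero 2 (Real.sinh_pos_iff.2 hρ).ne'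
  rw [Real.cosh_sq] at hrel
  rw [halen]
  field_simp
  linear_combination -hrel

/-- For a semi-ideal ultraparallel trapezoid: the upper side is the geodesic with ideal
endpoints `l₁, l₂` (distinct future light-like directions), orthogonal to the unit normal
`m'`; the lower line has unit normal `m`; `B₁, B₂` on the lower line are the orthogonal
projections of the ideal points (`lᵢ` is a positive multiple of `Bᵢ + m`); the two lines are
ultraparallel at distance `ρ₁₂ > 0` (`⟨m, m'⟩ = cosh ρ₁₂`), and `a₁₂ = |B₁B₂| ≥ 0`
(`cosh a₁₂ = -⟨B₁, B₂⟩`).  Then `cosh a₁₂ = 1 + 2 / sinh² ρ₁₂`. -/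
theorem semi_ideal_trapezoid_height
    (m m' B₁ B₂ l₁ l₂ : Fin 3 → ℝ) (ρ₁₂ a₁₂ : ℝ)
    (hm : mink m m = 1) (hm' : mink m' m' = 1)
    (hB₁ : mink B₁ B₁ = -1) (hB₁0 : 0 < B₁ 0) (hB₁m : mink B₁ m = 0)
    (hB₂ : mink B₂ B₂ = -1) (hB₂0 : 0 < B₂ 0) (hB₂m : mink B₂ m = 0)
    (hl₁ : mink l₁ l₁ = 0) (hl₁0 : 0 < l₁ 0)
    (hl₂ : mink l₂ l₂ = 0) (hl₂0 : 0 < l₂ 0)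
    (hind : ¬ ∃ t : ℝ, l₂ = t • l₁)
    (hup₁ : mink m' l₁ = 0) (hup₂ : mink m' l₂ = 0)
    (hproj₁ : ∃ c : ℝ, 0 < c ∧ l₁ = c • (B₁ + m))
    (hproj₂ : ∃ c : ℝ, 0 < c ∧ l₂ = c • (B₂ + m))
    (hρ : 0 < ρ₁₂) (hdist : mink m m' = Real.cosh ρ₁₂)
    (ha : 0 ≤ a₁₂) (halen : Real.cosh a₁₂ = -(mink B₁ B₂)) :
    Real.cosh a₁₂ = 1 + 2 / Real.sinh ρ₁₂ ^ 2 :=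
  semi_ideal_trapezoid_height_general m m' B₁ B₂ l₁ l₂ ρ₁₂ a₁₂ hm hm' hB₁ hB₁m hB₂ hB₂m hind hup₁
    hup₂ hproj₁ hproj₂ hρ hdist halen
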